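/- arXiv:1312.0913 — 3 statements merged into one kernel-verified Lean document; each statement's English description precedes it below -/
import Mathlib

section
/- In Σ_{8g−4}, the permutation Q^{4g−2}·τ is the product of the 4g−2 disjoint transpositions (1,4g+1)(2,4g+2)…(4g−4,8g−4)(4g−3,4g−1)(4g−2,4g). -/
/- We model the symmetric group Σ_{8g−4} on the labels {1,…,8g−4} as
   `Equiv.Perm (Fin (8g−4))`, the label k corresponding to the index k−1. -/

/-- Q = (1,2,3,…,8g−4), the standard (8g−4)-cycle. -/
def Qperm (g : ℕ) : Equiv.Perm (Fin (8 * g - 4)) := finRotate (8 * g - 4)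

/-- underlying function of τ (on 0-based indices):
τ = (1,3,5,…,4g−3)(2,4,6,…,4g−2)(8g−5,8g−7,…,4g−1)(8g−4,8g−6,…,4g). -/
def tauFun (g v : ℕ) : ℕ :=
  if v + 2 ≤ 4 * g - 3 then v + 2
  else if v = 4 * g - 4 then 0
  else if v = 4 * g - 3 then 1
  else if 4 * g ≤ v then v - 2
  else if v = 4 * g - 2 then 8 * g - 6
  else 8 * g - 5

/-- underlying function of τ⁻¹ (on 0-based indices). -/
def tauInvFun (g v : ℕ) : ℕ :=
  if v = 0 then 4 * g - 4
  else if v = 1 then 4 * g - 3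
  else if v + 3 ≤ 4 * g then v - 2
  else if v = 8 * g - 6 then 4 * g - 2
  else if v = 8 * g - 5 then 4 * g - 1
  else v + 2

/-- τ = (1,3,5,…,4g−3)(2,4,6,…,4g−2)(8g−5,8g−7,…,4g−1)(8g−4,8g−6,…,4g) ∈ Σ_{8g−4}. -/
def tauPerm (g : ℕ) : Equiv.Perm (Fin (8 * g - 4)) where
  toFun v := ⟨tauFun g v.val, by
    have h := v.isLt; simp only [tauFun]; split_ifs <;> omega⟩
  invFun v := ⟨tauInvFun g v.val, by
    have h := v.isLt; simp only [tauInvFun]; split_ifs <;> omega⟩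
  left_inv v := by
    have h := v.isLt
    apply Fin.ext
    show tauInvFun g (tauFun g v.val) = v.val
    unfold tauFun
    split_ifs <;> (unfold tauInvFun; split_ifs <;> first | omega | exact (‹False›).elim)
  right_inv v := by
    have h := v.isLt
    apply Fin.ext
    show tauFun g (tauInvFun g v.val) = v.val
    unfold tauInvFun
    split_ifs <;> (unfold tauFun; split_ifs <;> first | omega | exact (‹False›).elim)

/-- Underlying function (on 0-based indices) of the involution
(1,4g+1)(2,4g+2)…(4g−4,8g−4)(4g−3,4g−1)(4g−2,4g). -/
def WFun (g v : ℕ) : ℕ :=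
  if v + 5 ≤ 4 * g then v + 4 * g
  else if v = 4 * g - 4 then 4 * g - 2
  else if v = 4 * g - 3 then 4 * g - 1
  else if v = 4 * g - 2 then 4 * g - 4
  else if v = 4 * g - 1 then 4 * g - 3
  else v - 4 * g

/-- Copy of `WFun`, used as the inverse function. -/
def WInvFun (g v : ℕ) : ℕ :=
  if v + 5 ≤ 4 * g then v + 4 * g
  else if v = 4 * g - 4 then 4 * g - 2
  else if v = 4 * g - 3 then 4 * g - 1
  else if v = 4 * g - 2 then 4 * g - 4
  else if v = 4 * g - 1 then 4 * g - 3
  else v - 4 * g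

/-- The permutation (1,4g+1)(2,4g+2)…(4g−4,8g−4)(4g−3,4g−1)(4g−2,4g) ∈ Σ_{8g−4},
a product of 4g−2 disjoint transpositions. -/
def Wperm (g : ℕ) : Equiv.Perm (Fin (8 * g - 4)) where
  toFun v := ⟨WFun g v.val, by
    have h := v.isLt; unfold WFun; split_ifs <;> omega⟩
  invFun v := ⟨WInvFun g v.val, by
    have h := v.isLt; unfold WInvFun; split_ifs <;> omega⟩
  left_inv v := by
    have h := v.isLt
    apply Fin.ext
    show WInvFun g (WFun g v.val) = v.val
    unfold WFun
    split_ifs <;> (unfold WInvFun; split_ifs <;> first | omega | exact (‹False›).elim)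
  right_inv v := by
    have h := v.isLt
    apply Fin.ext
    show WFun g (WInvFun g v.val) = v.val
    unfold WInvFun
    split_ifs <;> (unfold WFun; split_ifs <;> first | omega | exact (‹False›).elim)

/- In Σ_{8g−4}, the permutation Q^{4g−2}·τ is the product of the 4g−2 disjoint
   transpositions (1,4g+1)(2,4g+2)…(4g−4,8g−4)(4g−3,4g−1)(4g−2,4g). -/

lemma finRotate_val_aux {n : ℕ} (hn : 0 < n) (v : Fin n) :
    ((finRotate n) v).val = (v.val + 1) % n := by
  obtain ⟨m, rfl⟩ := Nat.exists_eq_succ_of_ne_zero hn.ne'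
  rw [finRotate_succ_apply, Fin.val_add, Fin.val_one', Nat.add_mod_mod]

lemma qpow_val (g : ℕ) (hg : 1 ≤ g) (k : ℕ) (v : Fin (8 * g - 4)) :
    (((Qperm g) ^ k) v).val = (v.val + k) % (8 * g - 4) := by
  induction k with
  | zero => simp [Nat.mod_eq_of_lt v.isLt]
  | succ k ih =>
    rw [pow_succ', Equiv.Perm.mul_apply]
    show ((finRotate (8 * g - 4)) _).val = _
    rw [finRotate_val_aux (by omega), ih, Nat.mod_add_mod]
    ring_nf

lemma mod_two_cases (n x : ℕ) (h : x < 2 * n) : x % n = x ∨ x % n = x - n := by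
  rcases lt_or_ge x n with h1 | h1
  · left; exact Nat.mod_eq_of_lt h1
  · right; rw [Nat.mod_eq_sub_mod h1, Nat.mod_eq_of_lt (by omega)]

theorem QpowMulTau_eq_product_of_transpositions (g : ℕ) (hg : 1 ≤ g) :
    (Qperm g) ^ (4 * g - 2) * tauPerm g = Wperm g := by
  ext v
  rw [Equiv.Perm.mul_apply]
  rw [qpow_val g hg]
  have hlt := v.isLt
  show (tauFun g v.val + (4 * g - 2)) % (8 * g - 4) = WFun g v.val
  have htb : tauFun g v.val < 8 * g - 4 := by unfold tauFun; split_ifs <;> omega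
  rcases Nat.lt_or_ge (tauFun g v.val + (4 * g - 2)) (8 * g - 4) with hc | hc
  · rw [Nat.mod_eq_of_lt hc]
    simp only [tauFun, WFun] at hc ⊢
    split_ifs at hc ⊢ <;> omega
  · rw [Nat.mod_eq_sub_mod hc, Nat.mod_eq_of_lt (by omega)]
    simp only [tauFun, WFun] at hc ⊢
    split_ifs at hc ⊢ <;> omega
end

section
/- The number of parity-respecting permutations σ of {1,…,8g−4} of the form σ = Q^{4g−2}C, where C² = Q^{4g−2}τ and C is a product of 2g−1 disjoint 4-cycles each interleaving one 'even' and one 'odd' transposition, equals 2^{2g−1}·(2g−1)!. -/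
/-- γ respects parity if i ≡ j (mod 2) ⟺ γ(i) ≡ γ(j) (mod 2) on labels {1,…,8g−4}
(the label of v : Fin (8g−4) is v.val + 1). -/
def RespectsParity (g : ℕ) (γ : Equiv.Perm (Fin (8 * g - 4))) : Prop :=
  ∀ i j : Fin (8 * g - 4),
    ((i : ℕ) + 1) % 2 = ((j : ℕ) + 1) % 2 ↔ ((γ i : ℕ) + 1) % 2 = ((γ j : ℕ) + 1) % 2

lemma mod_helper {a b n : ℕ} (h : b < n) (h2 : a = b ∨ a = b + n) : a % n = b := by
  rcases h2 with rfl | rfl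
  · exact Nat.mod_eq_of_lt h
  · rw [Nat.add_mod_right]; exact Nat.mod_eq_of_lt h

lemma finRotate_pow_val : ∀ (N k : ℕ) (v : Fin N), (((finRotate N) ^ k) v).val = (v.val + k) % N := by
  intro N
  cases N with
  | zero => intro k v; exact v.elim0
  | succ n =>
    intro k
    induction k with
    | zero => intro v; simp [Nat.mod_eq_of_lt v.isLt]
    | succ k ih =>
      intro v
      rw [pow_succ, Equiv.Perm.mul_apply, ih, finRotate_succ_apply]
      have h1 : ((v + 1 : Fin (n+1))).val = (v.val + 1) % (n + 1) := by
        rw [Fin.val_add, Fin.val_one', Nat.add_mod_mod]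
      rw [h1, Nat.mod_add_mod]
      congr 1
      omega

lemma tauPerm_val (g : ℕ) (v : Fin (8*g-4)) : ((tauPerm g) v).val = tauFun g v.val := rfl

lemma P_val (g : ℕ) (x : Fin (8*g-4)) :
    ((((Qperm g) ^ (4*g-2) * tauPerm g)) x).val = (tauFun g x.val + (4*g-2)) % (8*g-4) := by
  rw [Equiv.Perm.mul_apply, Qperm, finRotate_pow_val, tauPerm_val]

lemma Qpow_parity (g : ℕ) (x : Fin (8*g-4)) (hg : 1 ≤ g) :
    (((Qperm g) ^ (4*g-2)) x).val % 2 = x.val % 2 := by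
  have hx := x.isLt
  rw [Qperm, finRotate_pow_val]
  have h1 : (x.val + (4*g-2)) % (8*g-4) = x.val + (4*g-2) ∨
      (8*g-4 ≤ x.val + (4*g-2) ∧
        (x.val + (4*g-2)) % (8*g-4) = x.val + (4*g-2) - (8*g-4)) := by
    rcases lt_or_ge (x.val + (4*g-2)) (8*g-4) with h | h
    · exact Or.inl (Nat.mod_eq_of_lt h)
    · refine Or.inr ⟨h, ?_⟩
      rw [Nat.mod_eq_sub_mod h]
      exact Nat.mod_eq_of_lt (by omega)
  rcases h1 with h | ⟨h2, h⟩ <;> rw [h] <;> omega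

def psiFun (g : ℕ) (y : Fin (2*g-1) × Bool × Bool) : ℕ :=
  2 * y.1.val + (if y.2.1 then 1 else 0) +
    (if y.2.2 then (if y.1.val = 2*g-2 then 2 else 4*g) else 0)

lemma psiFun_lt (g : ℕ) (hg : 1 ≤ g) (y : Fin (2*g-1) × Bool × Bool) : psiFun g y < 8*g-4 := by
  obtain ⟨k, p, s⟩ := y
  have hk := k.isLt
  unfold psiFun
  dsimp only
  split_ifs <;> omega

lemma psiFun_inj (g : ℕ) (hg : 1 ≤ g) : Function.Injective (psiFun g) := by
  rintro ⟨k, p, s⟩ ⟨k', p', s'⟩ h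
  have hk := k.isLt; have hk' := k'.isLt
  unfold psiFun at h
  dsimp only at h
  cases p <;> cases p' <;> cases s <;> cases s' <;>
    simp only [if_true, if_false, Bool.false_eq_true, Bool.true_eq_false, ite_true, ite_false] at h <;>
    refine Prod.ext (Fin.ext ?_) (Prod.ext ?_ ?_) <;>
    dsimp only
  all_goals
    first
      | rfl
      | ((try split_ifs at h) <;> omega)
      | (exfalso; (try split_ifs at h) <;> omega)

noncomputable def psi (g : ℕ) (hg : 1 ≤ g) : (Fin (2*g-1) × Bool × Bool) ≃ Fin (8*g-4) :=
  Equiv.ofBijective (fun y => ⟨psiFun g y, psiFun_lt g hg y⟩) (by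
    rw [Fintype.bijective_iff_injective_and_card]
    refine ⟨fun y y' h => psiFun_inj g hg (by simpa [Fin.ext_iff] using h), ?_⟩
    simp only [Fintype.card_prod, Fintype.card_fin, Fintype.card_bool]
    omega)

lemma psi_val (g : ℕ) (hg : 1 ≤ g) (y : Fin (2*g-1) × Bool × Bool) :
    (psi g hg y : ℕ) = psiFun g y := by
  simp [psi, Equiv.ofBijective]

lemma psi_parity (g : ℕ) (hg : 1 ≤ g) (y : Fin (2*g-1) × Bool × Bool) :
    (psi g hg y : ℕ) % 2 = if y.2.1 then 1 else 0 := by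
  obtain ⟨k, p, s⟩ := y
  rw [psi_val]
  unfold psiFun
  dsimp only
  split_ifs <;> omega

def cEquiv (g : ℕ) (π : Equiv.Perm (Fin (2*g-1))) (ε : Fin (2*g-1) → Bool) :
    Equiv.Perm (Fin (2*g-1) × Bool × Bool) where
  toFun y := if y.2.1 then (π.symm y.1, false, !(xor y.2.2 (ε (π.symm y.1))))
             else (π y.1, true, xor y.2.2 (ε y.1))
  invFun y := if y.2.1 then (π.symm y.1, false, xor y.2.2 (ε (π.symm y.1)))
              else (π y.1, true, xor (!y.2.2) (ε y.1))
  left_inv := by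
    rintro ⟨k, p, s⟩
    cases p <;>
      simp only [if_true, if_false, Bool.false_eq_true, ite_true, ite_false,
        Equiv.symm_apply_apply, Equiv.apply_symm_apply] <;>
      cases s <;> cases hε : ε (π.symm k) <;> cases hε' : ε k <;> simp_all
  right_inv := by
    rintro ⟨k, p, s⟩
    cases p <;>
      simp only [if_true, if_false, Bool.false_eq_true, ite_true, ite_false,
        Equiv.symm_apply_apply, Equiv.apply_symm_apply] <;>
      cases s <;> cases hε : ε (π.symm k) <;> cases hε' : ε k <;> simp_all

def flipPerm (g : ℕ) : Equiv.Perm (Fin (2*g-1) × Bool × Bool) where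
  toFun y := (y.1, y.2.1, !y.2.2)
  invFun y := (y.1, y.2.1, !y.2.2)
  left_inv := by rintro ⟨k, p, s⟩; simp
  right_inv := by rintro ⟨k, p, s⟩; simp

lemma cEquiv_sq (g : ℕ) (π : Equiv.Perm (Fin (2*g-1))) (ε : Fin (2*g-1) → Bool) :
    (cEquiv g π ε) ^ 2 = flipPerm g := by
  apply Equiv.ext
  rintro ⟨k, p, s⟩
  rw [pow_two, Equiv.Perm.mul_apply]
  cases p <;>
    simp only [cEquiv, flipPerm, Equiv.coe_fn_mk, if_true, if_false, Bool.false_eq_true,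
      ite_true, ite_false, Equiv.symm_apply_apply, Equiv.apply_symm_apply] <;>
    cases s <;> cases hε : ε (π.symm k) <;> cases hε' : ε k <;> simp_all

lemma cEquiv_fst_snd (g : ℕ) (π : Equiv.Perm (Fin (2*g-1))) (ε : Fin (2*g-1) → Bool)
    (y : Fin (2*g-1) × Bool × Bool) : ((cEquiv g π ε) y).2.1 = !y.2.1 := by
  obtain ⟨k, p, s⟩ := y
  cases p <;> simp [cEquiv]

lemma P_eq (g : ℕ) (hg : 1 ≤ g) :
    (Qperm g) ^ (4*g-2) * tauPerm g = (psi g hg).permCongr (flipPerm g) := by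
  suffices h : ∀ y, ((Qperm g) ^ (4*g-2) * tauPerm g) (psi g hg y) = psi g hg (flipPerm g y) by
    apply Equiv.ext
    intro x
    rw [Equiv.permCongr_apply, ← h, Equiv.apply_symm_apply]
  rintro ⟨k, p, s⟩
  have hk := k.isLt
  apply Fin.ext
  rw [P_val, psi_val]
  have hflip : flipPerm g (k, p, s) = (k, p, !s) := rfl
  rw [hflip, psi_val]
  unfold psiFun tauFun
  dsimp only
  cases p <;> cases s <;>
    simp only [if_true, if_false, Bool.false_eq_true, Bool.true_eq_false, ite_true, ite_false,
      Bool.not_true, Bool.not_false] <;>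
    split_ifs <;>
    (refine mod_helper ?_ ?_ <;> omega)

lemma permCongr_mul {α β : Type*} (e : α ≃ β) (f1 f2 : Equiv.Perm α) :
    (e.permCongr f1) * (e.permCongr f2) = e.permCongr (f1 * f2) := by
  apply Equiv.ext
  intro x
  simp [Equiv.permCongr_apply, Equiv.Perm.mul_apply]

lemma Cperm_sq (g : ℕ) (hg : 1 ≤ g) (π : Equiv.Perm (Fin (2*g-1))) (ε : Fin (2*g-1) → Bool) :
    ((psi g hg).permCongr (cEquiv g π ε)) ^ 2 = (Qperm g) ^ (4*g-2) * tauPerm g := by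
  rw [pow_two, permCongr_mul, ← pow_two, cEquiv_sq, ← P_eq]

lemma Cperm_parity (g : ℕ) (hg : 1 ≤ g) (π : Equiv.Perm (Fin (2*g-1))) (ε : Fin (2*g-1) → Bool)
    (x : Fin (8*g-4)) : (((psi g hg).permCongr (cEquiv g π ε)) x : ℕ) % 2 ≠ (x : ℕ) % 2 := by
  have h1 : (x : ℕ) % 2 = if ((psi g hg).symm x).2.1 then 1 else 0 := by
    conv_lhs => rw [← Equiv.apply_symm_apply (psi g hg) x]
    exact psi_parity g hg _
  have h2 : (((psi g hg).permCongr (cEquiv g π ε)) x : ℕ) % 2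
      = if (!((psi g hg).symm x).2.1) then 1 else 0 := by
    rw [Equiv.permCongr_apply, psi_parity, cEquiv_fst_snd]
  rw [h1, h2]
  cases ((psi g hg).symm x).2.1 <;> simp

lemma sigma_respects (g : ℕ) (hg : 1 ≤ g) (C : Equiv.Perm (Fin (8*g-4)))
    (hrev : ∀ x, (C x : ℕ) % 2 ≠ (x : ℕ) % 2) :
    RespectsParity g ((Qperm g) ^ (4*g-2) * C) := by
  intro i j
  have h1 := Qpow_parity g (C i) hg
  have h2 := Qpow_parity g (C j) hg
  have h3 := hrev i
  have h4 := hrev j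
  simp only [Equiv.Perm.mul_apply]
  omega

lemma involutive_fixed_point {n : ℕ} (hn : Odd n) (d : Fin n → Fin n)
    (hd : Function.Involutive d) : ∃ k, d k = k := by
  by_contra h
  push_neg at h
  have h2 := Equiv.Perm.two_dvd_card_support (σ := hd.toPerm)
    (by apply Equiv.ext; intro x; exact hd x)
  have h3 : (Function.Involutive.toPerm d hd).support = Finset.univ := by
    rw [Finset.eq_univ_iff_forall]
    intro x
    rw [Equiv.Perm.mem_support]
    exact h x
  rw [h3, Finset.card_univ, Fintype.card_fin] at h2
  rcases hn with ⟨m, hm⟩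
  omega

lemma surj_aux (g : ℕ) (hg : 1 ≤ g) (σ C : Equiv.Perm (Fin (8*g-4)))
    (hresp : RespectsParity g σ)
    (hC2 : C ^ 2 = (Qperm g) ^ (4*g-2) * tauPerm g)
    (hσ : σ = (Qperm g) ^ (4*g-2) * C) :
    ∃ (π : Equiv.Perm (Fin (2*g-1))) (ε : Fin (2*g-1) → Bool),
      C = (psi g hg).permCongr (cEquiv g π ε) := by
  set e := psi g hg with he
  set c : Equiv.Perm (Fin (2*g-1) × Bool × Bool) := e.permCongr.symm C with hc
  have hCc : C = e.permCongr c := (Equiv.apply_symm_apply e.permCongr C).symm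
  have hcy : ∀ y, c y = e.symm (C (e y)) := by
    intro y
    rw [hc, Equiv.permCongr_symm, Equiv.permCongr_apply, Equiv.symm_symm]
  have hflip : ∀ y, c (c y) = flipPerm g y := by
    intro y
    rw [hcy, hcy, Equiv.apply_symm_apply]
    have h5 : C (C (e y)) = ((Qperm g) ^ (4*g-2) * tauPerm g) (e y) := by
      rw [← hC2, pow_two, Equiv.Perm.mul_apply]
    rw [h5, P_eq g hg, Equiv.permCongr_apply, ← he, Equiv.symm_apply_apply,
      Equiv.symm_apply_apply]
  have hcflip : ∀ y, c (flipPerm g y) = flipPerm g (c y) := by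
    intro y
    conv_lhs => rw [← hflip y]
    exact hflip (c y)
  -- parity dichotomy
  have hσC : ∀ x, (σ x : ℕ) % 2 = (C x : ℕ) % 2 := by
    intro x
    rw [hσ, Equiv.Perm.mul_apply, Qpow_parity g _ hg]
  have hrespC : ∀ i j : Fin (8*g-4),
      ((i : ℕ) % 2 = (j : ℕ) % 2) ↔ ((C i : ℕ) % 2 = (C j : ℕ) % 2) := by
    intro i j
    have h := hresp i j
    have h1 := hσC i
    have h2 := hσC j
    omega
  have hdi : (∀ x, (C x : ℕ) % 2 = (x : ℕ) % 2) ∨ (∀ x, (C x : ℕ) % 2 ≠ (x : ℕ) % 2) := by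
    have hpos : 0 < 8*g-4 := by omega
    set x₀ : Fin (8*g-4) := ⟨0, hpos⟩
    by_cases h0 : (C x₀ : ℕ) % 2 = (x₀ : ℕ) % 2
    · left; intro x; have := hrespC x x₀; omega
    · right; intro x; have := hrespC x x₀; omega
  -- parity of psi and c-coordinates
  have hcoord : ∀ y, (e (c y) : ℕ) % 2 = (if (c y).2.1 then 1 else 0) := fun y => psi_parity g hg _
  have hecy : ∀ y, e (c y) = C (e y) := by
    intro y; rw [hcy, Equiv.apply_symm_apply]
  rcases hdi with hA | hB
  · -- parity preserving : contradiction
    exfalso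
    have hcp : ∀ y, (c y).2.1 = y.2.1 := by
      intro y
      have h4 := hcoord y
      rw [hecy] at h4
      have h2 := hA (e y)
      have h3 := psi_parity g hg y
      rw [← he] at h3
      rw [h2, h3] at h4
      cases hy : y.2.1 <;> cases hz : (c y).2.1 <;> rw [hy, hz] at h4 <;>
        first | rfl | (exfalso; simp at h4)
    set d : Fin (2*g-1) → Fin (2*g-1) := fun k => (c (k, false, false)).1 with hd
    set s₀ : Fin (2*g-1) → Bool := fun k => (c (k, false, false)).2.2 with hs₀
    have hck : ∀ k, c (k, false, false) = (d k, false, s₀ k) := by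
      intro k
      refine Prod.ext rfl (Prod.ext ?_ rfl)
      exact hcp (k, false, false)
    have hstep : ∀ k, c (d k, false, s₀ k) = (k, false, true) := by
      intro k
      rw [← hck k]
      exact hflip (k, false, false)
    have hdinv : Function.Involutive d := by
      intro k
      cases hs : s₀ k
      · have h6 := hstep k
        rw [hs] at h6
        have : d (d k) = ((k, false, true) : Fin (2*g-1) × Bool × Bool).1 := by
          rw [hd]; dsimp only; rw [h6]
        exact this
      · have h6 := hstep k
        rw [hs] at h6
        have h7 : c (d k, false, false) = flipPerm g (c (d k, false, true)) := by
          have h8 := hcflip (d k, false, true)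
          have h9 : flipPerm g ((d k : Fin (2*g-1)), false, true) = ((d k : Fin (2*g-1)), false, false) := rfl
          rw [h9] at h8
          exact h8
        rw [h6] at h7
        have : d (d k) = (flipPerm g ((k : Fin (2*g-1)), false, true)).1 := by
          rw [hd]; dsimp only; rw [h7]
        exact this
    have hnofix : ∀ k, d k ≠ k := by
      intro k hk
      cases hs : s₀ k
      · have h6 := hstep k
        rw [hs, hk] at h6
        have h7 := hck k
        rw [hs] at h7
        rw [h7] at h6
        simp at h6
      · have h6 := hstep k
        rw [hs, hk] at h6
        have h7 := hck k
        rw [hs] at h7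
        have h8 : c (k, false, true) = c (k, false, false) := by rw [h6, h7, hk]
        have := c.injective h8
        simp at this
    obtain ⟨k, hk⟩ := involutive_fixed_point (n := 2*g-1) ⟨g-1, by omega⟩ d hdinv
    exact hnofix k hk
  · -- parity reversing: construct π, ε
    have hcp : ∀ y, (c y).2.1 = !y.2.1 := by
      intro y
      have h4 := hcoord y
      rw [hecy] at h4
      have h2 := hB (e y)
      have h3 := psi_parity g hg y
      rw [← he] at h3
      rw [h3] at h2
      rw [h4] at h2
      cases hy : y.2.1 <;> cases hz : (c y).2.1 <;> rw [hy, hz] at h2 <;>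
        first | rfl | (exfalso; simp at h2)
    set π₀ : Fin (2*g-1) → Fin (2*g-1) := fun k => (c (k, false, false)).1 with hπ₀
    set ε : Fin (2*g-1) → Bool := fun k => (c (k, false, false)).2.2 with hε
    have hck : ∀ k, c (k, false, false) = (π₀ k, true, ε k) := by
      intro k
      refine Prod.ext rfl (Prod.ext ?_ rfl)
      exact hcp (k, false, false)
    have hck2 : ∀ k, c (k, false, true) = (π₀ k, true, !(ε k)) := by
      intro k
      have h8 := hcflip (k, false, false)
      have h9 : flipPerm g ((k : Fin (2*g-1)), false, false) = ((k : Fin (2*g-1)), false, true) := rfl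
      rw [h9, hck] at h8
      rw [h8]
      rfl
    have hπinj : Function.Injective π₀ := by
      intro k k' hkk
      by_cases hεe : ε k = ε k'
      · have : c (k, false, false) = c (k', false, false) := by
          rw [hck, hck, hkk, hεe]
        have := c.injective this
        simpa using this
      · have hεe' : ε k' = !(ε k) := by
          cases h1 : ε k <;> cases h2 : ε k' <;> simp only [h1, h2] at hεe ⊢ <;>
            first | rfl | (exact absurd rfl hεe) | (exact absurd hεe (by simp)) | simp
        have : c (k, false, true) = c (k', false, false) := by
          rw [hck2, hck, hkk, hεe']
        have := c.injective this
        simp at this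
    refine ⟨Equiv.ofBijective π₀ (Finite.injective_iff_bijective.mp hπinj), ε, ?_⟩
    rw [hCc]
    congr 1
    apply Equiv.ext
    rintro ⟨j, p, s⟩
    have hπ : ∀ k, (Equiv.ofBijective π₀ (Finite.injective_iff_bijective.mp hπinj)) k = π₀ k :=
      fun k => rfl
    cases p
    · -- odd class
      show c (j, false, s) = _
      cases s
      · rw [hck]
        simp [cEquiv, hπ]
      · rw [hck2]
        simp [cEquiv, hπ]
    · -- even class
      show c (j, true, s) = _
      set πE := Equiv.ofBijective π₀ (Finite.injective_iff_bijective.mp hπinj) with hπE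
      set k : Fin (2*g-1) := πE.symm j with hks
      have hπk : π₀ k = j := by
        rw [← hπ k, hks, Equiv.apply_symm_apply]
      have h8 := hflip (k, false, xor s (ε k))
      have h9 : c ((k : Fin (2*g-1)), false, xor s (ε k)) = (π₀ k, true, s) := by
        cases hs1 : s <;> cases hε1 : ε k <;>
          simp only [hs1, hε1, Bool.xor_false, Bool.xor_true, Bool.true_xor, Bool.false_xor,
            Bool.not_false, Bool.not_true] <;>
          first
            | (rw [hck]; simp [hε1])
            | (rw [hck2]; simp [hε1])
      rw [h9, hπk] at h8
      have h10 : flipPerm g ((k : Fin (2*g-1)), false, xor s (ε k)) = (k, false, !(xor s (ε k))) := rfl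
      rw [h10] at h8
      rw [h8]
      show _ = ((πE.symm j : Fin (2*g-1)), false, !(xor s (ε (πE.symm j))))
      rw [← hks]

/- The number of parity-respecting permutations σ of {1,…,8g−4} of the form
   σ = Q^{4g−2}·C with C² = Q^{4g−2}·τ equals 2^{2g−1}·(2g−1)!. -/
theorem count_parity_respecting_square_root_candidates (g : ℕ) (hg : 1 ≤ g) :
    Nat.card {σ : Equiv.Perm (Fin (8 * g - 4)) //
        RespectsParity g σ ∧
        ∃ C : Equiv.Perm (Fin (8 * g - 4)),
          C ^ 2 = (Qperm g) ^ (4 * g - 2) * tauPerm g ∧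
          σ = (Qperm g) ^ (4 * g - 2) * C}
      = 2 ^ (2 * g - 1) * Nat.factorial (2 * g - 1) := by
  classical
  set F : Equiv.Perm (Fin (2*g-1)) × (Fin (2*g-1) → Bool) →
      {σ : Equiv.Perm (Fin (8 * g - 4)) //
        RespectsParity g σ ∧
        ∃ C : Equiv.Perm (Fin (8 * g - 4)),
          C ^ 2 = (Qperm g) ^ (4 * g - 2) * tauPerm g ∧
          σ = (Qperm g) ^ (4 * g - 2) * C} := fun pe =>
    ⟨(Qperm g) ^ (4 * g - 2) * (psi g hg).permCongr (cEquiv g pe.1 pe.2),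
      sigma_respects g hg _ (Cperm_parity g hg pe.1 pe.2),
      (psi g hg).permCongr (cEquiv g pe.1 pe.2), Cperm_sq g hg pe.1 pe.2, rfl⟩ with hF
  have hFbij : Function.Bijective F := by
    constructor
    · rintro ⟨π, ε⟩ ⟨π', ε'⟩ h
      rw [hF, Subtype.mk.injEq] at h
      have h2 := mul_left_cancel h
      have h3 := (Equiv.injective _) h2
      have h4 : ∀ k : Fin (2*g-1), cEquiv g π ε (k, false, false)
          = cEquiv g π' ε' (k, false, false) := by rw [h3]; intro k; rfl
      have h5 : ∀ k : Fin (2*g-1), (π k, true, ε k) = ((π' k : Fin (2*g-1)), true, ε' k) := by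
        intro k
        have := h4 k
        simpa [cEquiv] using this
      refine Prod.ext (Equiv.ext fun k => ?_) (funext fun k => ?_)
      · exact congrArg Prod.fst (h5 k)
      · exact congrArg (fun z => z.2.2) (h5 k)
    · rintro ⟨σ, hresp, C, hC2, hσ⟩
      obtain ⟨π, ε, hCeq⟩ := surj_aux g hg σ C hresp hC2 hσ
      refine ⟨(π, ε), Subtype.ext ?_⟩
      rw [hF]
      dsimp only
      rw [hσ, hCeq]
  rw [Nat.card_congr (Equiv.ofBijective F hFbij).symm, Nat.card_eq_fintype_card]
  simp only [Fintype.card_prod, Fintype.card_perm, Fintype.card_fun, Fintype.card_bool,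
    Fintype.card_fin]
  rw [Nat.mul_comm]
end

section
/- The function λ(g) = arcosh( (1 + 2cos(π/(2−4g))) / √( 4cos(π/(2−4g))(1 + cos(π/(2−4g))) + 1/(1+2cos(π/(2−4g)))² ) ) is a decreasing function of g for g ≥ 3, and lim_{g→∞} λ(g) = arcosh(9/√73). -/
open Real

/-- The inverse hyperbolic cosine, arcosh x = log (x + √(x² − 1)). -/
noncomputable def arcosh (x : ℝ) : ℝ := Real.log (x + Real.sqrt (x ^ 2 - 1))

/-- λ(g) = arcosh( (1 + 2cos(π/(2−4g))) /
    √( 4cos(π/(2−4g))(1 + cos(π/(2−4g))) + 1/(1+2cos(π/(2−4g)))² ) ),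
    where cos(π/(2−4g)) = cos(π/(4g−2)). -/
noncomputable def lam (g : ℝ) : ℝ :=
  _root_.arcosh ((1 + 2 * Real.cos (π / (2 - 4 * g))) /
    Real.sqrt (4 * Real.cos (π / (2 - 4 * g)) * (1 + Real.cos (π / (2 - 4 * g)))
      + 1 / (1 + 2 * Real.cos (π / (2 - 4 * g))) ^ 2))

noncomputable def auxF (c : ℝ) : ℝ :=
  (1 + 2 * c) / Real.sqrt (4 * c * (1 + c) + 1 / (1 + 2 * c) ^ 2)

lemma auxD_pos {c : ℝ} (hc : 1/2 ≤ c) :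
    0 < 4 * c * (1 + c) + 1 / (1 + 2 * c) ^ 2 := by
  have h1 : (0:ℝ) < 1 + 2 * c := by linarith
  have h2 : (0:ℝ) < 1 / (1 + 2 * c) ^ 2 := by positivity
  nlinarith

lemma auxF_eq {c : ℝ} (hc : 1/2 ≤ c) :
    auxF c = Real.sqrt ((1 + 2 * c) ^ 2 / (4 * c * (1 + c) + 1 / (1 + 2 * c) ^ 2)) := by
  rw [auxF, Real.sqrt_div (by positivity), Real.sqrt_sq (by linarith)]

lemma one_le_auxF {c : ℝ} (hc : 1/2 ≤ c) : 1 ≤ auxF c := by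
  rw [auxF_eq hc, Real.one_le_sqrt]
  have hD := auxD_pos hc
  have h1 : (0:ℝ) < 1 + 2 * c := by linarith
  have h2 : 1 / (1 + 2 * c) ^ 2 ≤ 1 := by
    rw [div_le_one (by positivity)]; nlinarith
  rw [le_div_iff₀ hD]
  nlinarith

lemma auxF_lt {c₁ c₂ : ℝ} (h1 : 1/2 ≤ c₁) (h12 : c₁ < c₂) : auxF c₂ < auxF c₁ := by
  have h1' : 1/2 ≤ c₂ := by linarith
  rw [auxF_eq h1, auxF_eq h1']
  have hD1 := auxD_pos h1
  have hD2 := auxD_pos h1'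
  apply Real.sqrt_lt_sqrt (by positivity)
  rw [div_lt_div_iff₀ hD2 hD1]
  have e1 : (0:ℝ) < 1 + 2 * c₁ := by linarith
  have e2 : (0:ℝ) < 1 + 2 * c₂ := by linarith
  have hu : (4:ℝ) ≤ (1 + 2 * c₁) ^ 2 := by nlinarith
  have huv : (1 + 2 * c₁) ^ 2 < (1 + 2 * c₂) ^ 2 := by nlinarith
  have hv0 : (0:ℝ) ≤ (1 + 2 * c₂) ^ 2 := by positivity
  have key : (1 + 2 * c₁) ^ 2 * (1 + 2 * c₂) ^ 2 > (1 + 2 * c₁) ^ 2 + (1 + 2 * c₂) ^ 2 := by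
    nlinarith [mul_nonneg (show (0:ℝ) ≤ (1 + 2 * c₁) ^ 2 - 4 by linarith) hv0]
  field_simp
  nlinarith [mul_pos (show (0:ℝ) < (1 + 2 * c₂) ^ 2 - (1 + 2 * c₁) ^ 2 by linarith)
    (show (0:ℝ) < (1 + 2 * c₁) ^ 2 * (1 + 2 * c₂) ^ 2 - (1 + 2 * c₁) ^ 2 - (1 + 2 * c₂) ^ 2 by linarith)]

lemma arcosh_strictMonoOn : StrictMonoOn _root_.arcosh (Set.Ici 1) := by
  intro x hx y hy hxy
  have hx1 : (1:ℝ) ≤ x := hx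
  have hy1 : (1:ℝ) ≤ y := hy
  unfold _root_.arcosh
  have hs := Real.sqrt_nonneg (x ^ 2 - 1)
  apply Real.log_lt_log (by linarith)
  have : Real.sqrt (x ^ 2 - 1) ≤ Real.sqrt (y ^ 2 - 1) :=
    Real.sqrt_le_sqrt (by nlinarith)
  linarith

lemma lam_eq (g : ℝ) : lam g = _root_.arcosh (auxF (Real.cos (π / (2 - 4 * g)))) := rfl

/- λ is a decreasing function of g for g ≥ 3, and λ(g) → arcosh(9/√73) as g → ∞. -/
theorem lam_decreasing_and_limit :
    StrictAntiOn lam (Set.Ici (3 : ℝ)) ∧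
    Filter.Tendsto lam Filter.atTop (nhds (_root_.arcosh (9 / Real.sqrt 73))) := by
  constructor
  · intro a ha b hb hab
    have ha3 : (3:ℝ) ≤ a := ha
    have hb3 : (3:ℝ) ≤ b := hb
    have hπ := Real.pi_pos
    have hA : (0:ℝ) < 4 * a - 2 := by linarith
    have hB : (0:ℝ) < 4 * b - 2 := by linarith
    have hxe : Real.cos (π / (2 - 4 * a)) = Real.cos (π / (4 * a - 2)) := by
      rw [show (2:ℝ) - 4 * a = -(4 * a - 2) by ring, div_neg, Real.cos_neg]
    have hye : Real.cos (π / (2 - 4 * b)) = Real.cos (π / (4 * b - 2)) := by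
      rw [show (2:ℝ) - 4 * b = -(4 * b - 2) by ring, div_neg, Real.cos_neg]
    have hmema : π / (4 * a - 2) ∈ Set.Icc 0 π := by
      constructor
      · positivity
      · rw [div_le_iff₀ hA]; nlinarith
    have hmemb : π / (4 * b - 2) ∈ Set.Icc 0 π := by
      constructor
      · positivity
      · rw [div_le_iff₀ hB]; nlinarith
    have hxy : Real.cos (π / (4 * a - 2)) < Real.cos (π / (4 * b - 2)) :=
      Real.strictAntiOn_cos hmemb hmema (div_lt_div_of_pos_left hπ hA (by linarith))
    have hxhalf : 1/2 ≤ Real.cos (π / (4 * a - 2)) := by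
      have h3 : π / (4 * a - 2) ≤ π / 3 := by
        rw [div_le_div_iff₀ hA (by norm_num)]; nlinarith
      calc (1:ℝ)/2 = Real.cos (π / 3) := (Real.cos_pi_div_three).symm
        _ ≤ _ := Real.cos_le_cos_of_nonneg_of_le_pi (by positivity) (by linarith) h3
    have hyhalf : 1/2 ≤ Real.cos (π / (4 * b - 2)) := le_of_lt (lt_of_le_of_lt hxhalf hxy)
    rw [lam_eq, lam_eq, hxe, hye]
    exact arcosh_strictMonoOn (Set.mem_Ici.mpr (one_le_auxF hyhalf))
      (Set.mem_Ici.mpr (one_le_auxF hxhalf)) (auxF_lt hxhalf hxy)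
  · -- limit
    have h : Filter.Tendsto (fun g : ℝ => 4 * g - 2) Filter.atTop Filter.atTop :=
      Filter.tendsto_atTop_add_const_right _ _ (Filter.tendsto_id.const_mul_atTop (by norm_num))
    have h0 : Filter.Tendsto (fun g : ℝ => π / (2 - 4 * g)) Filter.atTop (nhds 0) := by
      have h1 := (h.inv_tendsto_atTop.const_mul π).neg
      have h2 : (fun g : ℝ => -(π * (4 * g - 2)⁻¹)) = fun g : ℝ => π / (2 - 4 * g) := by
        funext g
        rw [div_eq_mul_inv, show (2:ℝ) - 4 * g = -(4 * g - 2) by ring, inv_neg]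
        ring
      rw [Pi.inv_def] at h1
      simp only [h2, mul_zero, neg_zero] at h1
      exact h1
    have hcos : Filter.Tendsto (fun g : ℝ => Real.cos (π / (2 - 4 * g))) Filter.atTop (nhds 1) := by
      have := (Real.continuous_cos.continuousAt (x := 0)).tendsto.comp h0
      rw [Real.cos_zero] at this
      exact this
    have hnum : Filter.Tendsto (fun g : ℝ => 1 + 2 * Real.cos (π / (2 - 4 * g)))
        Filter.atTop (nhds 3) := by
      have := Filter.Tendsto.add (tendsto_const_nhds (x := (1:ℝ))) (hcos.const_mul 2)
      norm_num at this
      exact this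
    have hden : Filter.Tendsto (fun g : ℝ =>
        4 * Real.cos (π / (2 - 4 * g)) * (1 + Real.cos (π / (2 - 4 * g)))
          + 1 / (1 + 2 * Real.cos (π / (2 - 4 * g))) ^ 2) Filter.atTop (nhds (73/9)) := by
      have hA := Filter.Tendsto.mul (hcos.const_mul 4)
        (Filter.Tendsto.add (tendsto_const_nhds (x := (1:ℝ))) hcos)
      have hB := Filter.Tendsto.div (tendsto_const_nhds (x := (1:ℝ)))
        ((Filter.Tendsto.add (tendsto_const_nhds (x := (1:ℝ))) (hcos.const_mul 2)).pow 2)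
        (by norm_num)
      have := hA.add hB
      norm_num at this
      convert this using 2
      norm_num
    have hsq : Filter.Tendsto (fun g : ℝ =>
        Real.sqrt (4 * Real.cos (π / (2 - 4 * g)) * (1 + Real.cos (π / (2 - 4 * g)))
          + 1 / (1 + 2 * Real.cos (π / (2 - 4 * g))) ^ 2)) Filter.atTop
        (nhds (Real.sqrt (73/9))) :=
      (Real.continuous_sqrt.continuousAt).tendsto.comp hden
    have hval : (3:ℝ) / Real.sqrt (73/9) = 9 / Real.sqrt 73 := by
      rw [Real.sqrt_div (by norm_num) 9, show (9:ℝ) = 3 ^ 2 by norm_num,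
        Real.sqrt_sq (by norm_num)]
      have h73 : Real.sqrt 73 ≠ 0 := by positivity
      field_simp
    have hG : Filter.Tendsto (fun g : ℝ =>
        (1 + 2 * Real.cos (π / (2 - 4 * g))) /
        Real.sqrt (4 * Real.cos (π / (2 - 4 * g)) * (1 + Real.cos (π / (2 - 4 * g)))
          + 1 / (1 + 2 * Real.cos (π / (2 - 4 * g))) ^ 2)) Filter.atTop
        (nhds (9 / Real.sqrt 73)) := by
      rw [← hval]
      exact hnum.div hsq (by positivity)
    have h9 : (0:ℝ) < 9 / Real.sqrt 73 := by positivity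
    have hcont : ContinuousAt _root_.arcosh (9 / Real.sqrt 73) := by
      have hs := Real.sqrt_nonneg ((9 / Real.sqrt 73) ^ 2 - 1)
      exact ContinuousAt.log (f := fun x => x + Real.sqrt (x ^ 2 - 1)) (by fun_prop) (by beta_reduce; positivity)
    exact hcont.tendsto.comp hG
end
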